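/- Let M ∈ ℂ with M ≠ 0 and y ∈ ℂ, and set P = [[M, 1], [0, M⁻¹]] and Q = [[M, 0], [2−y, M⁻¹]]. Then for every integer m, (QP⁻¹)^m (QP) (Q⁻¹P)^m = I − S_m(y)S_{m−1}(y)·[[2M²−y, M+M⁻¹], [(M+M⁻¹)(2−y), 2M⁻²−y]] + S_m(y)²·[[M²−1, M], [M(2−y), −y+1+M⁻²]] + S_{m−1}(y)²·[[−y+1+M², M⁻¹], [M⁻¹(2−y), M⁻²−1]]. -/

import Mathlib

open Polynomial

/-- Integer-indexed Chebyshev-like polynomials: `S 0 = 1`, `S 1 = X`,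
and `S (l+1) = X * S l - S (l-1)` for all `l : ℤ`
(equivalently `S l = U_l (v/2)` for the Chebyshev polynomials `U` of the second kind). -/
@[semireducible] noncomputable def chebS (R : Type*) [CommRing R] : ℤ → R[X]
  | 0 => 1
  | 1 => X
  | (n : ℕ) + 2 => X * chebS R (n + 1) - chebS R n
  | -((n : ℕ) + 1) => X * chebS R (-n) - chebS R (-n + 1)
  termination_by n => Int.natAbs n + Int.natAbs (n - 1)


/-!
Write `A = QP⁻¹` and `B = Q⁻¹P`, so the word is `A^m (QP) B^m`. The right-hand side is a quadratic
form in `(a, b) = (S_m(y), S_{m-1}(y))` with matrix coefficients, once its identity term is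
homogenised to `(a² - yab + b²) • 1` (the two agree by the Cassini identity for `S`). A direct
computation shows that `X ↦ A X B` acts on this form by `(a, b) ↦ (ya - b, a)`, which is the
Chebyshev recurrence; since `QP` is the form at `(1, 0) = (S_0, S_{-1})`, induction on `m` in both
directions gives the formula.
-/

theorem chebS_eq_S (R : Type*) [CommRing R] : chebS R = Chebyshev.S R := by
  funext n
  induction n using Chebyshev.induct with
  | zero => rw [chebS, Chebyshev.S_zero]
  | one => rw [chebS, Chebyshev.S_one]
  | add_two n ih₁ ih₀ => rw [Chebyshev.S_add_two, ← ih₁, ← ih₀]; exact chebS.eq_3 R n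
  | neg_add_one n ih₀ ih₁ =>
    rw [Chebyshev.S_sub_one, ← ih₀, ← ih₁, ← chebS.eq_4, Int.negSucc_eq, neg_add']

theorem Matrix.zpow_mul_mul_zpow_eq_of_mul_mul_eq {n R : Type*} [Fintype n] [DecidableEq n]
    [CommRing R] {A B : Matrix n n R} (hA : IsUnit A.det) (hB : IsUnit B.det)
    {f : ℤ → Matrix n n R} (hf : ∀ k, A * f k * B = f (k + 1)) (k : ℤ) :
    A ^ k * f 0 * B ^ k = f k := by
  induction k using Int.induction_on with
  | zero => simp
  | succ k ih =>
    rw [add_comm, Matrix.zpow_one_add hA, add_comm, Matrix.zpow_add_one hB, ← hf, ← ih]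
    simp only [Matrix.mul_assoc]
  | pred k ih =>
    have hA' : A ^ (-(k : ℤ) - 1) = A⁻¹ * A ^ (-(k : ℤ)) := by
      rw [sub_eq_neg_add, Matrix.zpow_add hA, Matrix.zpow_neg_one]
    calc A ^ (-(k : ℤ) - 1) * f 0 * B ^ (-(k : ℤ) - 1)
        = A⁻¹ * (A ^ (-(k : ℤ)) * f 0 * B ^ (-(k : ℤ))) * B⁻¹ := by
          rw [hA', Matrix.zpow_sub_one hB]; simp only [Matrix.mul_assoc]
      _ = A⁻¹ * (A * f (-k - 1) * B) * B⁻¹ := by rw [ih, hf, sub_add_cancel]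
      _ = f (-k - 1) := by
          simp only [Matrix.mul_assoc, Matrix.mul_nonsing_inv _ hB, Matrix.mul_one,
            Matrix.nonsing_inv_mul_cancel_left _ _ hA]

section DoubleTwist

variable {K : Type*} [Field K]

def repP (M : K) : Matrix (Fin 2) (Fin 2) K := !![M, 1; 0, M⁻¹]

def repQ (M y : K) : Matrix (Fin 2) (Fin 2) K := !![M, 0; 2 - y, M⁻¹]

def oddWordForm (M y a b : K) : Matrix (Fin 2) (Fin 2) K :=
  (a ^ 2 - y * a * b + b ^ 2) • 1
    - (a * b) • !![2*M^2 - y, M + M⁻¹; (M + M⁻¹) * (2 - y), 2*M⁻¹^2 - y]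
    + a ^ 2 • !![M^2 - 1, M; M * (2 - y), -y + 1 + M⁻¹^2]
    + b ^ 2 • !![-y + 1 + M^2, M⁻¹; M⁻¹ * (2 - y), M⁻¹^2 - 1]

variable {M : K} (y : K)

theorem det_repP (hM : M ≠ 0) : (repP M).det = 1 := by
  simp [repP, Matrix.det_fin_two_of, hM]

theorem det_repQ (hM : M ≠ 0) : (repQ M y).det = 1 := by
  simp [repQ, Matrix.det_fin_two_of, hM]

theorem inv_repP (hM : M ≠ 0) : (repP M)⁻¹ = !![M⁻¹, -1; 0, M] :=
  Matrix.inv_eq_right_inv (by simp [repP, Matrix.one_fin_two, hM])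

theorem inv_repQ (hM : M ≠ 0) : (repQ M y)⁻¹ = !![M⁻¹, 0; y - 2, M] :=
  Matrix.inv_eq_right_inv (by simp [repQ, Matrix.one_fin_two, hM]; ring)

theorem repQ_mul_repP (hM : M ≠ 0) : repQ M y * repP M = oddWordForm M y 1 0 := by
  rw [repQ, repP, oddWordForm, Matrix.one_fin_two]
  ext i j
  fin_cases i <;> fin_cases j <;> simp [field]
  ring

theorem oddWordForm_conj (hM : M ≠ 0) (a b : K) :
    repQ M y * (repP M)⁻¹ * oddWordForm M y a b * ((repQ M y)⁻¹ * repP M)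
      = oddWordForm M y (y * a - b) a := by
  rw [inv_repP hM, inv_repQ y hM, repQ, repP, oddWordForm, oddWordForm, Matrix.one_fin_two]
  ext i j
  fin_cases i <;> fin_cases j <;>
    simp [Matrix.mul_apply, Fin.sum_univ_two] <;> field_simp <;> ring

end DoubleTwist

/-- For `P = [[M,1],[0,M⁻¹]]`, `Q = [[M,0],[2-y,M⁻¹]]` and every integer `m`, the matrix
`(QP⁻¹)^m (QP) (Q⁻¹P)^m` has the stated closed form in terms of `S_m(y)` and `S_{m-1}(y)`. -/
theorem odd_word_formula (M y : ℂ) (hM : M ≠ 0) (m : ℤ) :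
    (!![M, 0; 2 - y, M⁻¹] * (!![M, 1; 0, M⁻¹])⁻¹) ^ m
      * (!![M, 0; 2 - y, M⁻¹] * !![M, 1; 0, M⁻¹])
      * ((!![M, 0; 2 - y, M⁻¹])⁻¹ * !![M, 1; 0, M⁻¹]) ^ m
    = 1 - ((chebS ℂ m).eval y * (chebS ℂ (m - 1)).eval y) •
            !![2*M^2 - y, M + M⁻¹; (M + M⁻¹) * (2 - y), 2*M⁻¹^2 - y]
        + ((chebS ℂ m).eval y) ^ 2 •
            !![M^2 - 1, M; M * (2 - y), -y + 1 + M⁻¹^2]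
        + ((chebS ℂ (m - 1)).eval y) ^ 2 •
            !![-y + 1 + M^2, M⁻¹; M⁻¹ * (2 - y), M⁻¹^2 - 1] := by
  set S : ℤ → ℂ := fun k => (Chebyshev.S ℂ k).eval y with hS
  have hA : IsUnit (repQ M y * (repP M)⁻¹).det := by simp [det_repP hM, det_repQ y hM]
  have hB : IsUnit ((repQ M y)⁻¹ * repP M).det := by simp [det_repP hM, det_repQ y hM]
  have hstep (k : ℤ) : repQ M y * (repP M)⁻¹ * oddWordForm M y (S k) (S (k - 1))
      * ((repQ M y)⁻¹ * repP M) = oddWordForm M y (S (k + 1)) (S (k + 1 - 1)) := by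
    rw [oddWordForm_conj y hM, add_sub_cancel_right]
    simp only [hS, Chebyshev.S_add_one, eval_sub, eval_mul, eval_X]
  have hcassini : S m ^ 2 - y * S m * S (m - 1) + S (m - 1) ^ 2 = 1 := by
    have := congrArg (eval y) (Chebyshev.S_sq_add_S_sq ℂ (m - 1))
    simp only [sub_add_cancel, eval_sub, eval_add, eval_mul, eval_pow, eval_X, eval_one] at this
    linear_combination this
  have hword := Matrix.zpow_mul_mul_zpow_eq_of_mul_mul_eq hA hB hstep m
  simp only [hS, Chebyshev.S_zero, zero_sub, Chebyshev.S_neg_one, eval_one, eval_zero] at hword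
  show (repQ M y * (repP M)⁻¹) ^ m * (repQ M y * repP M) * ((repQ M y)⁻¹ * repP M) ^ m = _
  rw [repQ_mul_repP y hM, hword, oddWordForm, chebS_eq_S, hcassini, one_smul]
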